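/- Let U₁, U₂ be the indirect utility functions of two IC-IR multi-good monopoly mechanisms with transfer functions t₁ ≥ t₂ almost everywhere, both convex, nondecreasing, nonnegative functions on [0,1]^m with U_k(θ) = max over the menu of (q·θ − t). If U₁(θ) ≥ U₂(θ) at some θ ∈ [0,1]^m, then U₁(λθ) ≥ U₂(λθ) for every λ > 1 with λθ ∈ [0,1]^m; and if U₁(θ) > U₂(θ), then U₁(λθ) > U₂(λθ). -/

import Mathlib

open MeasureTheory

/-- Euclidean dot product on `Fin m → ℝ`. -/
def dot {m : ℕ} (x y : Fin m → ℝ) : ℝ := ∑ i, x i * y i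

/-!
Along the ray through `θ`, `r ↦ r U_k(r⁻¹θ)` is the upper envelope of the affine functions
`r ↦ q_k(y)·θ - r t_k(y)`, and the one for `y` touches it, up to an error `m ‖r⁻¹θ - y‖`,
at `r⁻¹θ ≈ y`.
So `G(r) = r (U₁ - U₂)(r⁻¹θ)` has slope `t₂ - t₁ ≤ 0` wherever `t₂ ≤ t₁`, whence `G(λ⁻¹) ≥ G(1)`,
i.e. `U₁(λθ) - U₂(λθ) ≥ λ (U₁(θ) - U₂(θ))`. As the ray is null, `t₂ ≤ t₁` is used at good points
near a fine grid on the ray instead; the slope errors telescope since transfers vary by at most `m`.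
-/

open Set

section Cube

variable {m : ℕ}

lemma dot_eq_dotProduct (x y : Fin m → ℝ) : dot x y = x ⬝ᵥ y := rfl

lemma dot_smul_right (x y : Fin m → ℝ) (c : ℝ) : dot x (c • y) = c * dot x y :=
  dotProduct_smul c x y

lemma dot_le_card_mul_norm {a : Fin m → ℝ} (ha : ∀ j, |a j| ≤ 1) (b : Fin m → ℝ) :
    dot a b ≤ m * ‖b‖ :=
  calc dot a b ≤ ∑ _j : Fin m, ‖b‖ := Finset.sum_le_sum fun j _ =>
        calc a j * b j ≤ |a j| * |b j| := by rw [← abs_mul]; exact le_abs_self _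
          _ ≤ 1 * ‖b‖ := mul_le_mul (ha j) (norm_le_pi_norm b j) (abs_nonneg _) zero_le_one
          _ = ‖b‖ := one_mul _
    _ = m * ‖b‖ := by simp

lemma norm_le_one_of_mem_Icc {x : Fin m → ℝ} (hx : x ∈ Icc 0 1) : ‖x‖ ≤ 1 :=
  (pi_norm_le_iff_of_nonneg zero_le_one).2 fun j => by
    rw [Real.norm_of_nonneg (hx.1 j)]; exact hx.2 j

lemma abs_sub_apply_le_one {a b : Fin m → ℝ} (ha : a ∈ Icc 0 1) (hb : b ∈ Icc 0 1) (j : Fin m) :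
    |(a - b) j| ≤ 1 :=
  abs_sub_le_of_nonneg_of_le (ha.1 j) (ha.2 j) (hb.1 j) (hb.2 j)

lemma smul_mem_Icc_of_smul_mem {θ : Fin m → ℝ} {s l : ℝ} (hs : 0 < s) (hsl : s ≤ l)
    (hlθ : l • θ ∈ Icc 0 1) : s • θ ∈ Icc 0 1 := by
  have hl : 0 < l := hs.trans_le hsl
  have h := (convex_Icc (0 : Fin m → ℝ) 1).smul_mem_of_zero_mem (left_mem_Icc.2 zero_le_one) hlθ
    ⟨div_nonneg hs.le hl.le, (div_le_one hl).2 hsl⟩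
  rwa [smul_smul, div_mul_cancel₀ s hl.ne'] at h

end Cube

lemma closure_interior_subset_closure_setOf_of_ae_restrict {X : Type*} [TopologicalSpace X]
    [MeasurableSpace X] [OpensMeasurableSpace X] {μ : Measure X} [μ.IsOpenPosMeasure]
    {s : Set X} {P : X → Prop} (h : ∀ᵐ x ∂μ.restrict s, P x) :
    closure (interior s) ⊆ closure {x | x ∈ s ∧ P x} := by
  have hint : ∀ᵐ x ∂μ, x ∈ interior s → P x :=
    (ae_restrict_iff' isOpen_interior.measurableSet).1
      (ae_restrict_of_ae_restrict_of_subset interior_subset h)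
  have hsub : interior s ⊆ closure {x | x ∈ s ∧ P x} :=
    ((Measure.dense_of_ae hint).open_subset_closure_inter isOpen_interior).trans
      (closure_mono fun x hx => ⟨interior_subset hx.1, hx.2 hx.1⟩)
  simpa only [closure_closure] using closure_mono hsub

lemma closure_interior_Icc_zero_one (m : ℕ) :
    closure (interior (Icc (0 : Fin m → ℝ) 1)) = Icc 0 1 := by
  have hne : (interior (Icc (0 : Fin m → ℝ) 1)).Nonempty := by
    refine ⟨fun _ => 1 / 2, ?_⟩
    rw [← pi_univ_Icc, interior_pi_set finite_univ]
    intro j _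
    simp only [Pi.zero_apply, Pi.one_apply, interior_Icc]
    norm_num
  rw [(convex_Icc (0 : Fin m → ℝ) 1 : Convex ℝ _).closure_interior_eq_closure_of_nonempty_interior
    hne, isClosed_Icc.closure_eq]

lemma exists_norm_sub_le_of_ae_restrict_Icc {m : ℕ} {P : (Fin m → ℝ) → Prop}
    (h : ∀ᵐ x ∂(volume : Measure (Fin m → ℝ)).restrict (Icc 0 1), P x)
    {x : Fin m → ℝ} (hx : x ∈ Icc 0 1) {ε : ℝ} (hε : 0 < ε) :
    ∃ y ∈ Icc (0 : Fin m → ℝ) 1, P y ∧ ‖x - y‖ ≤ ε := by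
  rw [← closure_interior_Icc_zero_one] at hx
  obtain ⟨y, ⟨hy, hPy⟩, hxy⟩ :=
    Metric.mem_closure_iff.1 (closure_interior_subset_closure_setOf_of_ae_restrict h hx) ε hε
  exact ⟨y, hy, hPy, (dist_eq_norm x y ▸ hxy).le⟩

lemma le_of_forall_sub_le_mul_sub_add {G : ℝ → ℝ} {a b M : ℝ} (hab : a ≤ b)
    (h : ∀ ε > 0, ∃ τ : ℝ → ℝ, (∀ r ∈ Icc a b, ∀ r' ∈ Icc a b, τ r - τ r' ≤ M) ∧
      ∀ r ∈ Icc a b, ∀ r' ∈ Icc a b, r' ≤ r → G r - G r' ≤ (r - r') * (τ r' - τ r) + ε) :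
    G b ≤ G a := by
  refine le_of_forall_pos_le_add fun c hc => ?_
  obtain ⟨τ₀, hτ₀, -⟩ := h 1 one_pos
  have hM : 0 ≤ M := by simpa using hτ₀ a (left_mem_Icc.2 hab) a (left_mem_Icc.2 hab)
  obtain ⟨n, hn⟩ := exists_nat_gt (2 * (b - a) * M / c)
  have hn0 : (0 : ℝ) < n := lt_of_le_of_lt (by have := sub_nonneg.2 hab; positivity) hn
  obtain ⟨τ, hτM, hstep⟩ := h (c / (2 * n)) (by positivity)
  set δ := (b - a) / n with hδ_def
  have hδ : 0 ≤ δ := div_nonneg (sub_nonneg.2 hab) hn0.le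
  have hnδ : n * δ = b - a := by rw [hδ_def]; field_simp
  set r : ℕ → ℝ := fun i => a + i * δ
  have hr : ∀ i ≤ n, r i ∈ Icc a b := fun i hi => by
    have hi' : (i : ℝ) ≤ n := by exact_mod_cast hi
    exact ⟨le_add_of_nonneg_right (by positivity), by nlinarith⟩
  have hsum : G b - G a ≤ δ * (τ a - τ b) + n * (c / (2 * n)) :=
    calc G b - G a = ∑ i ∈ Finset.range n, (G (r (i + 1)) - G (r i)) := by
          rw [Finset.sum_range_sub (fun i => G (r i)) n]; simp [r, hnδ]
      _ ≤ ∑ i ∈ Finset.range n, (δ * (τ (r i) - τ (r (i + 1))) + c / (2 * n)) := by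
          refine Finset.sum_le_sum fun i hi => ?_
          have hi := Finset.mem_range.1 hi
          have := hstep _ (hr (i + 1) hi) _ (hr i hi.le) (by simp only [r]; push_cast; linarith)
          simpa only [r, Nat.cast_succ, add_sub_add_left_eq_sub, ← sub_mul, add_sub_cancel_left,
            one_mul] using this
      _ = δ * (τ a - τ b) + n * (c / (2 * n)) := by
          rw [Finset.sum_add_distrib, ← Finset.mul_sum, Finset.sum_range_sub' (fun i => τ (r i)) n]
          simp [r, hnδ]
  have hδM : δ * (τ a - τ b) ≤ c / 2 :=
    calc δ * (τ a - τ b) ≤ δ * M := by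
          gcongr; exact hτM a (left_mem_Icc.2 hab) b (right_mem_Icc.2 hab)
      _ ≤ c / 2 := by
          rw [hδ_def, div_mul_eq_mul_div, div_le_iff₀ hn0]
          rw [div_lt_iff₀ hc] at hn
          linarith
  have : (n : ℝ) * (c / (2 * n)) = c / 2 := by field_simp
  linarith

def utility {m : ℕ} (q : (Fin m → ℝ) → Fin m → ℝ) (t : (Fin m → ℝ) → ℝ) (x : Fin m → ℝ) : ℝ :=
  dot (q x) x - t x

def IncentiveCompatible {m : ℕ} (q : (Fin m → ℝ) → Fin m → ℝ) (t : (Fin m → ℝ) → ℝ) : Prop :=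
  ∀ x ∈ Icc (0 : Fin m → ℝ) 1, ∀ y ∈ Icc (0 : Fin m → ℝ) 1, dot (q y) x - t y ≤ utility q t x

section Mechanism

variable {m : ℕ} {q : (Fin m → ℝ) → Fin m → ℝ} {t : (Fin m → ℝ) → ℝ}

lemma utility_le_add_norm_sub (hq : ∀ x ∈ Icc (0 : Fin m → ℝ) 1, q x ∈ Icc 0 1)
    (hIC : IncentiveCompatible q t) {x y : Fin m → ℝ} (hx : x ∈ Icc 0 1) (hy : y ∈ Icc 0 1) :
    utility q t x ≤ dot (q y) x - t y + m * ‖x - y‖ := by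
  have hIC := hIC y hy x hx
  have hb := dot_le_card_mul_norm (abs_sub_apply_le_one (hq x hx) (hq y hy)) (x - y)
  simp only [utility, dot_eq_dotProduct, sub_dotProduct, dotProduct_sub] at hIC hb ⊢
  linarith

lemma transfer_sub_le (hq : ∀ x ∈ Icc (0 : Fin m → ℝ) 1, q x ∈ Icc 0 1)
    (hIC : IncentiveCompatible q t) {x y : Fin m → ℝ} (hx : x ∈ Icc 0 1) (hy : y ∈ Icc 0 1) :
    t x - t y ≤ m := by
  have hIC := hIC x hx y hy
  have hb := (dot_le_card_mul_norm (abs_sub_apply_le_one (hq x hx) (hq y hy)) x).trans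
    (mul_le_of_le_one_right (Nat.cast_nonneg m) (norm_le_one_of_mem_Icc hx))
  simp only [utility, dot_eq_dotProduct, sub_dotProduct] at hIC hb
  linarith

lemma le_mul_utility_inv_smul (hIC : IncentiveCompatible q t) {θ y : Fin m → ℝ} {r : ℝ}
    (hr : 0 < r) (hx : r⁻¹ • θ ∈ Icc 0 1) (hy : y ∈ Icc 0 1) :
    dot (q y) θ - r * t y ≤ r * utility q t (r⁻¹ • θ) := by
  have h := mul_le_mul_of_nonneg_left (hIC _ hx y hy) hr.le
  rwa [dot_smul_right, mul_sub, mul_inv_cancel_left₀ hr.ne'] at h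

lemma mul_utility_inv_smul_le (hq : ∀ x ∈ Icc (0 : Fin m → ℝ) 1, q x ∈ Icc 0 1)
    (hIC : IncentiveCompatible q t) {θ y : Fin m → ℝ} {r ε : ℝ} (hr : 0 < r) (hr1 : r ≤ 1)
    (hx : r⁻¹ • θ ∈ Icc 0 1) (hy : y ∈ Icc 0 1) (hxy : ‖r⁻¹ • θ - y‖ ≤ ε) :
    r * utility q t (r⁻¹ • θ) ≤ dot (q y) θ - r * t y + m * ε := by
  have h := mul_le_mul_of_nonneg_left (utility_le_add_norm_sub hq hIC hx hy) hr.le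
  rw [dot_smul_right, mul_add, mul_sub, mul_inv_cancel_left₀ hr.ne'] at h
  have hε : r * (m * ‖r⁻¹ • θ - y‖) ≤ m * ε :=
    (mul_le_of_le_one_left (by positivity) hr1).trans (by gcongr)
  linarith

end Mechanism

noncomputable def rayGap {m : ℕ} (q₁ : (Fin m → ℝ) → Fin m → ℝ) (t₁ : (Fin m → ℝ) → ℝ)
    (q₂ : (Fin m → ℝ) → Fin m → ℝ) (t₂ : (Fin m → ℝ) → ℝ) (θ : Fin m → ℝ) (r : ℝ) : ℝ :=
  r * (utility q₁ t₁ (r⁻¹ • θ) - utility q₂ t₂ (r⁻¹ • θ))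

section TwoMechanisms

variable {m : ℕ} {q₁ q₂ : (Fin m → ℝ) → Fin m → ℝ} {t₁ t₂ : (Fin m → ℝ) → ℝ}

lemma rayGap_sub_rayGap_le (hq₁ : ∀ x ∈ Icc (0 : Fin m → ℝ) 1, q₁ x ∈ Icc 0 1)
    (hq₂ : ∀ x ∈ Icc (0 : Fin m → ℝ) 1, q₂ x ∈ Icc 0 1)
    (hIC₁ : IncentiveCompatible q₁ t₁) (hIC₂ : IncentiveCompatible q₂ t₂)
    {θ y y' : Fin m → ℝ} {r r' ε : ℝ} (hr' : 0 < r') (hr'r : r' ≤ r) (hr : r ≤ 1)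
    (hx : r⁻¹ • θ ∈ Icc 0 1) (hx' : r'⁻¹ • θ ∈ Icc 0 1) (hy : y ∈ Icc 0 1) (hy' : y' ∈ Icc 0 1)
    (hxy : ‖r⁻¹ • θ - y‖ ≤ ε) (hxy' : ‖r'⁻¹ • θ - y'‖ ≤ ε) (ht : t₂ y' ≤ t₁ y') :
    rayGap q₁ t₁ q₂ t₂ θ r - rayGap q₁ t₁ q₂ t₂ θ r' ≤ (r - r') * (t₁ y' - t₁ y) + 2 * m * ε := by
  have hr0 : 0 < r := hr'.trans_le hr'r
  have h₁ := mul_utility_inv_smul_le hq₁ hIC₁ hr0 hr hx hy hxy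
  have h₁' := le_mul_utility_inv_smul hIC₁ hr' hx' hy
  have h₂ := le_mul_utility_inv_smul hIC₂ hr0 hx hy'
  have h₂' := mul_utility_inv_smul_le hq₂ hIC₂ hr' (hr'r.trans hr) hx' hy' hxy'
  have ht' := mul_le_mul_of_nonneg_left ht (sub_nonneg.2 hr'r)
  simp only [rayGap]
  linarith

lemma mul_utility_sub_le_utility_sub_smul (hq₁ : ∀ x ∈ Icc (0 : Fin m → ℝ) 1, q₁ x ∈ Icc 0 1)
    (hq₂ : ∀ x ∈ Icc (0 : Fin m → ℝ) 1, q₂ x ∈ Icc 0 1)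
    (hIC₁ : IncentiveCompatible q₁ t₁) (hIC₂ : IncentiveCompatible q₂ t₂)
    (hT : ∀ᵐ x ∂(volume : Measure (Fin m → ℝ)).restrict (Icc 0 1), t₂ x ≤ t₁ x)
    {θ : Fin m → ℝ} {l : ℝ} (hl : 1 ≤ l) (hlθ : l • θ ∈ Icc 0 1) :
    l * (utility q₁ t₁ θ - utility q₂ t₂ θ) ≤ utility q₁ t₁ (l • θ) - utility q₂ t₂ (l • θ) := by
  have hl0 : 0 < l := one_pos.trans_le hl
  have hray : ∀ r ∈ Icc l⁻¹ 1, r⁻¹ • θ ∈ Icc 0 1 := fun r hr =>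
    have hr0 : 0 < r := (inv_pos.2 hl0).trans_le hr.1
    smul_mem_Icc_of_smul_mem (inv_pos.2 hr0) (inv_le_of_inv_le₀ hl0 hr.1) hlθ
  have hgap : rayGap q₁ t₁ q₂ t₂ θ 1 ≤ rayGap q₁ t₁ q₂ t₂ θ l⁻¹ := by
    refine le_of_forall_sub_le_mul_sub_add (M := m) (inv_le_one_of_one_le₀ hl) fun ε hε => ?_
    set δ := ε / (2 * m + 1)
    have hδ : 0 < δ := by positivity
    have hδε : 2 * m * δ ≤ ε := by
      rw [mul_div_assoc', div_le_iff₀ (by positivity)]; nlinarith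
    have hgood : ∀ r, ∃ y, r ∈ Icc l⁻¹ 1 →
        y ∈ Icc (0 : Fin m → ℝ) 1 ∧ t₂ y ≤ t₁ y ∧ ‖r⁻¹ • θ - y‖ ≤ δ := fun r => by
      by_cases hr : r ∈ Icc l⁻¹ 1
      · obtain ⟨y, hy, hty, hxy⟩ := exists_norm_sub_le_of_ae_restrict_Icc hT (hray r hr) hδ
        exact ⟨y, fun _ => ⟨hy, hty, hxy⟩⟩
      · exact ⟨0, fun h => absurd h hr⟩
    choose y hy using hgood
    refine ⟨fun r => t₁ (y r),
      fun r hr r' hr' => transfer_sub_le hq₁ hIC₁ (hy r hr).1 (hy r' hr').1,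
      fun r hr r' hr' hr'r => ?_⟩
    have := rayGap_sub_rayGap_le hq₁ hq₂ hIC₁ hIC₂ ((inv_pos.2 hl0).trans_le hr'.1) hr'r hr.2
      (hray r hr) (hray r' hr') (hy r hr).1 (hy r' hr').1 (hy r hr).2.2 (hy r' hr').2.2
      (hy r' hr').2.1
    linarith
  simp only [rayGap, inv_one, one_smul, one_mul, inv_inv] at hgap
  rwa [le_inv_mul_iff₀ hl0] at hgap

end TwoMechanisms

theorem stmt19_general {m : ℕ}
    (q₁ q₂ : (Fin m → ℝ) → (Fin m → ℝ)) (t₁ t₂ : (Fin m → ℝ) → ℝ)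
    (feas₁ : ∀ θ ∈ Set.Icc (0 : Fin m → ℝ) 1,
      q₁ θ ∈ Set.Icc (0 : Fin m → ℝ) 1 ∧ 0 ≤ t₁ θ)
    (feas₂ : ∀ θ ∈ Set.Icc (0 : Fin m → ℝ) 1,
      q₂ θ ∈ Set.Icc (0 : Fin m → ℝ) 1 ∧ 0 ≤ t₂ θ)
    (IC₁ : ∀ θ ∈ Set.Icc (0 : Fin m → ℝ) 1, ∀ θ' ∈ Set.Icc (0 : Fin m → ℝ) 1,
      dot (q₁ θ') θ - t₁ θ' ≤ dot (q₁ θ) θ - t₁ θ)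
    (IC₂ : ∀ θ ∈ Set.Icc (0 : Fin m → ℝ) 1, ∀ θ' ∈ Set.Icc (0 : Fin m → ℝ) 1,
      dot (q₂ θ') θ - t₂ θ' ≤ dot (q₂ θ) θ - t₂ θ)
    (hT : ∀ᵐ θ ∂((volume : Measure (Fin m → ℝ)).restrict (Set.Icc (0 : Fin m → ℝ) 1)),
      t₂ θ ≤ t₁ θ) :
    ∀ θ ∈ Set.Icc (0 : Fin m → ℝ) 1, ∀ l : ℝ, 1 < l →
      l • θ ∈ Set.Icc (0 : Fin m → ℝ) 1 →
      ((dot (q₂ θ) θ - t₂ θ ≤ dot (q₁ θ) θ - t₁ θ →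
          dot (q₂ (l • θ)) (l • θ) - t₂ (l • θ) ≤ dot (q₁ (l • θ)) (l • θ) - t₁ (l • θ)) ∧
       (dot (q₂ θ) θ - t₂ θ < dot (q₁ θ) θ - t₁ θ →
          dot (q₂ (l • θ)) (l • θ) - t₂ (l • θ) < dot (q₁ (l • θ)) (l • θ) - t₁ (l • θ))) := by
  intro θ _ l hl hlθ
  have hgap : l * (utility q₁ t₁ θ - utility q₂ t₂ θ) ≤
      utility q₁ t₁ (l • θ) - utility q₂ t₂ (l • θ) :=
    mul_utility_sub_le_utility_sub_smul (fun x hx => (feas₁ x hx).1) (fun x hx => (feas₂ x hx).1)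
      IC₁ IC₂ hT hl.le hlθ
  exact ⟨fun h => sub_nonneg.1 ((mul_nonneg (by linarith) (sub_nonneg.2 h)).trans hgap),
    fun h => sub_pos.1 ((mul_pos (by linarith) (sub_pos.2 h)).trans_le hgap)⟩

/-- Manelli–Vincent single-crossing along rays: for IC-IR multi-good monopoly mechanisms
`(q₁,t₁)` and `(q₂,t₂)` with `t₁ ≥ t₂` a.e., if the indirect utility of the first weakly
(resp. strictly) exceeds that of the second at `θ`, the same holds at `λθ` for `λ > 1`
with `λθ` in the cube. -/
theorem stmt19 {m : ℕ}
    (q₁ q₂ : (Fin m → ℝ) → (Fin m → ℝ)) (t₁ t₂ : (Fin m → ℝ) → ℝ)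
    (feas₁ : ∀ θ ∈ Set.Icc (0 : Fin m → ℝ) 1,
      q₁ θ ∈ Set.Icc (0 : Fin m → ℝ) 1 ∧ 0 ≤ t₁ θ)
    (feas₂ : ∀ θ ∈ Set.Icc (0 : Fin m → ℝ) 1,
      q₂ θ ∈ Set.Icc (0 : Fin m → ℝ) 1 ∧ 0 ≤ t₂ θ)
    (IC₁ : ∀ θ ∈ Set.Icc (0 : Fin m → ℝ) 1, ∀ θ' ∈ Set.Icc (0 : Fin m → ℝ) 1,
      dot (q₁ θ') θ - t₁ θ' ≤ dot (q₁ θ) θ - t₁ θ)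
    (IC₂ : ∀ θ ∈ Set.Icc (0 : Fin m → ℝ) 1, ∀ θ' ∈ Set.Icc (0 : Fin m → ℝ) 1,
      dot (q₂ θ') θ - t₂ θ' ≤ dot (q₂ θ) θ - t₂ θ)
    (IR₁ : ∀ θ ∈ Set.Icc (0 : Fin m → ℝ) 1, 0 ≤ dot (q₁ θ) θ - t₁ θ)
    (IR₂ : ∀ θ ∈ Set.Icc (0 : Fin m → ℝ) 1, 0 ≤ dot (q₂ θ) θ - t₂ θ)
    (hT : ∀ᵐ θ ∂((volume : Measure (Fin m → ℝ)).restrict (Set.Icc (0 : Fin m → ℝ) 1)),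
      t₂ θ ≤ t₁ θ) :
    ∀ θ ∈ Set.Icc (0 : Fin m → ℝ) 1, ∀ l : ℝ, 1 < l →
      l • θ ∈ Set.Icc (0 : Fin m → ℝ) 1 →
      ((dot (q₂ θ) θ - t₂ θ ≤ dot (q₁ θ) θ - t₁ θ →
          dot (q₂ (l • θ)) (l • θ) - t₂ (l • θ) ≤ dot (q₁ (l • θ)) (l • θ) - t₁ (l • θ)) ∧
       (dot (q₂ θ) θ - t₂ θ < dot (q₁ θ) θ - t₁ θ →
          dot (q₂ (l • θ)) (l • θ) - t₂ (l • θ) < dot (q₁ (l • θ)) (l • θ) - t₁ (l • θ))) :=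
  stmt19_general q₁ q₂ t₁ t₂ feas₁ feas₂ IC₁ IC₂ hT
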